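/- Suppose the posterior intervals I_i = [P[u = 0 | y_i = 1], P[u = 0 | y_i = 0]] and I_j = [P[u = 0 | y_j = 1], P[u = 0 | y_j = 0]] are not nested, i.e. neither interval contains the other, and both intervals are nondegenerate. Then there exist two concave functions l*_α, l*_β : [0,1] → ℝ (each of the bilinear form p ↦ min{C_R, p·C_F}) such that under l*_α one has VoI_G(j) = 0 ≤ VoI_G(i), while under l*_β one has VoI_G(i) = 0 ≤ VoI_G(j). -/

import Mathlib

open scoped Classical

/-- Probability of an event `E` under weights `w` on a finite outcome space. -/
noncomputable def Pr {Ω : Type*} [Fintype Ω] (w : Ω → ℝ) (E : Ω → Prop) : ℝ :=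
  ∑ ω ∈ Finset.univ.filter E, w ω

/-- Conditional probability `P[A | B]`. -/
noncomputable def cPr {Ω : Type*} [Fintype Ω] (w : Ω → ℝ) (A B : Ω → Prop) : ℝ :=
  Pr w (fun ω => A ω ∧ B ω) / Pr w B

/-- Posterior expected loss of inspecting a component with binary inspection outcome `y`
(`y = false` is an alarm), where `F` is the system-failure event and `l` the optimal
expected loss as a function of the system failure probability. -/
noncomputable def postLoss {Ω : Type*} [Fintype Ω] (w : Ω → ℝ) (F : Ω → Prop)
    (y : Ω → Bool) (l : ℝ → ℝ) : ℝ :=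
  Pr w (fun ω => y ω = false) * l (cPr w F (fun ω => y ω = false))
    + (1 - Pr w (fun ω => y ω = false)) * l (cPr w F (fun ω => y ω = true))

/-- Global value of information of inspecting a component with inspection outcome `y`. -/
noncomputable def VoIG {Ω : Type*} [Fintype Ω] (w : Ω → ℝ) (F : Ω → Prop)
    (y : Ω → Bool) (l : ℝ → ℝ) : ℝ :=
  l (Pr w F) - postLoss w F y l

/-! With `h = P[y = 0]`, `a = P[F | y = 0]` and `b = P[F | y = 1]`, total probability gives
`P[F] = h a + (1 - h) b`, so `VoI_G` is the Jensen gap of the loss at the two posteriors: it is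
nonnegative for a concave loss and vanishes where the loss is affine on `[b, a]`. The loss
`min C_R (p C_F)` is constant to the right of its kink `C_R / C_F` and linear to its left. If `I_i`
and `I_j` are not nested, one of them, say `I_i`, lies to the left of the other (`b_i < b_j` and
`a_i < a_j`); a kink at `b_j` flattens the loss on `I_j`, and a kink at `a_i` makes it linear on
`I_i`, both thresholds lying in `(0, 1)`. -/

open Set

section Probability

variable {Ω : Type*} [Fintype Ω] (w : Ω → ℝ)

lemma Pr_nonneg (hw0 : ∀ ω, 0 ≤ w ω) (E : Ω → Prop) : 0 ≤ Pr w E :=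
  Finset.sum_nonneg fun ω _ => hw0 ω

lemma Pr_mono (hw0 : ∀ ω, 0 ≤ w ω) {A B : Ω → Prop} (h : ∀ ω, A ω → B ω) :
    Pr w A ≤ Pr w B :=
  Finset.sum_le_sum_of_subset_of_nonneg (fun ω => by simpa using h ω) fun ω _ _ => hw0 ω

lemma cPr_nonneg (hw0 : ∀ ω, 0 ≤ w ω) (A B : Ω → Prop) : 0 ≤ cPr w A B :=
  div_nonneg (Pr_nonneg w hw0 _) (Pr_nonneg w hw0 _)

lemma cPr_le_one (hw0 : ∀ ω, 0 ≤ w ω) (A : Ω → Prop) {B : Ω → Prop} (hB : 0 < Pr w B) :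
    cPr w A B ≤ 1 :=
  (div_le_one hB).2 (Pr_mono w hw0 fun _ h => h.2)

lemma Pr_add_Pr_not (E : Ω → Prop) : Pr w E + Pr w (fun ω => ¬ E ω) = ∑ ω, w ω := by
  unfold Pr
  convert Finset.sum_filter_add_sum_filter_not Finset.univ E w

lemma Pr_and_add_Pr_and_not (A B : Ω → Prop) :
    Pr w (fun ω => A ω ∧ B ω) + Pr w (fun ω => A ω ∧ ¬ B ω) = Pr w A := by
  unfold Pr
  convert Finset.sum_filter_add_sum_filter_not (Finset.univ.filter A) B w using 2 <;>
    (congr 1; ext; simp)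

lemma Pr_eq_posterior_mix (hw1 : ∑ ω, w ω = 1) (F : Ω → Prop) (y : Ω → Bool)
    (h0 : 0 < Pr w (fun ω => y ω = false)) (h1 : Pr w (fun ω => y ω = false) < 1) :
    Pr w F = Pr w (fun ω => y ω = false) * cPr w F (fun ω => y ω = false)
      + (1 - Pr w (fun ω => y ω = false)) * cPr w F (fun ω => y ω = true) := by
  have htrue : Pr w (fun ω => y ω = true) = 1 - Pr w (fun ω => y ω = false) := by
    have := Pr_add_Pr_not w (fun ω => y ω = false)
    simp only [Bool.not_eq_false] at this
    linarith
  have hsplit := Pr_and_add_Pr_and_not w F (fun ω => y ω = false)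
  simp only [Bool.not_eq_false] at hsplit
  unfold cPr
  rw [← htrue, mul_div_cancel₀ _ h0.ne', mul_div_cancel₀ _ (by linarith), hsplit]

lemma VoIG_eq_jensen_gap (hw1 : ∑ ω, w ω = 1) (F : Ω → Prop) (y : Ω → Bool)
    (l : ℝ → ℝ) (h0 : 0 < Pr w (fun ω => y ω = false))
    (h1 : Pr w (fun ω => y ω = false) < 1) :
    VoIG w F y l
      = l (Pr w (fun ω => y ω = false) * cPr w F (fun ω => y ω = false)
          + (1 - Pr w (fun ω => y ω = false)) * cPr w F (fun ω => y ω = true))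
        - (Pr w (fun ω => y ω = false) * l (cPr w F (fun ω => y ω = false))
          + (1 - Pr w (fun ω => y ω = false)) * l (cPr w F (fun ω => y ω = true))) := by
  rw [VoIG, postLoss, ← Pr_eq_posterior_mix w hw1 F y h0 h1]

end Probability

lemma map_convex_combo_eq_of_eqOn_affine {l : ℝ → ℝ} {a b c k h : ℝ} (hba : b ≤ a)
    (h0 : 0 ≤ h) (h1 : h ≤ 1) (hl : ∀ x ∈ Icc b a, l x = c + k * x) :
    l (h * a + (1 - h) * b) = h * l a + (1 - h) * l b := by
  have hmem : h * a + (1 - h) * b ∈ Icc b a := ⟨by nlinarith, by nlinarith⟩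
  rw [hl _ hmem, hl a ⟨hba, le_rfl⟩, hl b ⟨le_rfl, hba⟩]
  ring

lemma concaveOn_min_mul (CR CF : ℝ) : ConcaveOn ℝ univ (fun p : ℝ => min CR (p * CF)) :=
  (concaveOn_const CR convex_univ).inf (((LinearMap.mul ℝ ℝ).flip CF).concaveOn convex_univ)

lemma min_mul_eq_const_of_le {CR CF b : ℝ} (hCF : 0 ≤ CF) (hb : CR ≤ b * CF) :
    ∀ x ∈ Ici b, min CR (x * CF) = CR + 0 * x := fun x hx => by
  rw [zero_mul, add_zero, min_eq_left (hb.trans (mul_le_mul_of_nonneg_right hx hCF))]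

lemma min_mul_eq_linear_of_le {CR CF a : ℝ} (hCF : 0 ≤ CF) (ha : a * CF ≤ CR) :
    ∀ x ∈ Iic a, min CR (x * CF) = 0 + CF * x := fun x hx => by
  rw [zero_add, mul_comm CF x, min_eq_right ((mul_le_mul_of_nonneg_right hx hCF).trans ha)]

section ValueOfInformation

variable {Ω : Type*} [Fintype Ω] {w : Ω → ℝ} (hw1 : ∑ ω, w ω = 1) (F : Ω → Prop)
  {y : Ω → Bool} (h0 : 0 < Pr w (fun ω => y ω = false))
  (h1 : Pr w (fun ω => y ω = false) < 1)
include hw1 h0 h1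

lemma VoIG_nonneg_of_concaveOn {s : Set ℝ} {l : ℝ → ℝ} (hl : ConcaveOn ℝ s l)
    (ha : cPr w F (fun ω => y ω = false) ∈ s) (hb : cPr w F (fun ω => y ω = true) ∈ s) :
    0 ≤ VoIG w F y l := by
  rw [VoIG_eq_jensen_gap w hw1 F y l h0 h1, sub_nonneg]
  exact hl.2 ha hb h0.le (by linarith) (by ring)

lemma VoIG_eq_zero_of_eqOn_affine {l : ℝ → ℝ} {c k : ℝ}
    (hba : cPr w F (fun ω => y ω = true) ≤ cPr w F (fun ω => y ω = false))
    (hl : ∀ x ∈ Icc (cPr w F (fun ω => y ω = true)) (cPr w F (fun ω => y ω = false)),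
      l x = c + k * x) :
    VoIG w F y l = 0 := by
  rw [VoIG_eq_jensen_gap w hw1 F y l h0 h1, sub_eq_zero]
  exact map_convex_combo_eq_of_eqOn_affine hba h0.le h1.le hl

lemma VoIG_min_mul_eq_zero {CR CF : ℝ} (hCF : 0 ≤ CF)
    (hba : cPr w F (fun ω => y ω = true) ≤ cPr w F (fun ω => y ω = false))
    (hkink : CR ≤ cPr w F (fun ω => y ω = true) * CF
      ∨ cPr w F (fun ω => y ω = false) * CF ≤ CR) :
    VoIG w F y (fun p => min CR (p * CF)) = 0 := by
  rcases hkink with hflat | hlin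
  · exact VoIG_eq_zero_of_eqOn_affine hw1 F h0 h1 hba
      fun x hx => min_mul_eq_const_of_le hCF hflat x hx.1
  · exact VoIG_eq_zero_of_eqOn_affine hw1 F h0 h1 hba
      fun x hx => min_mul_eq_linear_of_le hCF hlin x hx.2

end ValueOfInformation

lemma lt_and_lt_or_lt_and_lt_of_not_nested {a b a' b' : ℝ}
    (h : ¬ (b ≤ b' ∧ a' ≤ a)) (h' : ¬ (b' ≤ b ∧ a ≤ a')) :
    (b < b' ∧ a < a') ∨ (b' < b ∧ a' < a) := by
  push Not at h h'
  rcases le_or_gt b b' with hb | hb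
  · rcases hb.lt_or_eq with hlt | rfl
    · exact Or.inl ⟨hlt, h hb⟩
    · linarith [h le_rfl, h' le_rfl]
  · exact Or.inr ⟨hb, h' hb.le⟩

/-- If the posterior intervals `I_i` and `I_j` are nondegenerate and not nested
(neither contains the other), then there exist two bilinear concave losses
`l*_α(p) = min{CRa, p·CFa}` and `l*_β(p) = min{CRb, p·CFb}` such that under `l*_α` one has
`VoI_G(j) = 0 ≤ VoI_G(i)`, while under `l*_β` one has `VoI_G(i) = 0 ≤ VoI_G(j)`. -/
theorem not_nested_priority_depends_on_loss {Ω : Type*} [Fintype Ω] (w : Ω → ℝ)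
    (hw0 : ∀ ω, 0 ≤ w ω) (hw1 : ∑ ω, w ω = 1)
    (u yi yj : Ω → Bool)
    (hi0 : 0 < Pr w (fun ω => yi ω = false)) (hi1 : Pr w (fun ω => yi ω = false) < 1)
    (hj0 : 0 < Pr w (fun ω => yj ω = false)) (hj1 : Pr w (fun ω => yj ω = false) < 1)
    (hnondeg_i : cPr w (fun ω => u ω = false) (fun ω => yi ω = true)
        < cPr w (fun ω => u ω = false) (fun ω => yi ω = false))
    (hnondeg_j : cPr w (fun ω => u ω = false) (fun ω => yj ω = true)
        < cPr w (fun ω => u ω = false) (fun ω => yj ω = false))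
    (hnotnest_ij : ¬ (cPr w (fun ω => u ω = false) (fun ω => yi ω = true)
            ≤ cPr w (fun ω => u ω = false) (fun ω => yj ω = true)
          ∧ cPr w (fun ω => u ω = false) (fun ω => yj ω = false)
            ≤ cPr w (fun ω => u ω = false) (fun ω => yi ω = false)))
    (hnotnest_ji : ¬ (cPr w (fun ω => u ω = false) (fun ω => yj ω = true)
            ≤ cPr w (fun ω => u ω = false) (fun ω => yi ω = true)
          ∧ cPr w (fun ω => u ω = false) (fun ω => yi ω = false)
            ≤ cPr w (fun ω => u ω = false) (fun ω => yj ω = false))) :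
    ∃ CRa CFa CRb CFb : ℝ,
      0 < CRa ∧ CRa < CFa ∧ 0 < CRb ∧ CRb < CFb
      ∧ VoIG w (fun ω => u ω = false) yj (fun p => min CRa (p * CFa)) = 0
      ∧ 0 ≤ VoIG w (fun ω => u ω = false) yi (fun p => min CRa (p * CFa))
      ∧ VoIG w (fun ω => u ω = false) yi (fun p => min CRb (p * CFb)) = 0
      ∧ 0 ≤ VoIG w (fun ω => u ω = false) yj (fun p => min CRb (p * CFb)) := by
  have hbi0 := cPr_nonneg w hw0 (fun ω => u ω = false) (fun ω => yi ω = true)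
  have hbj0 := cPr_nonneg w hw0 (fun ω => u ω = false) (fun ω => yj ω = true)
  have hai1 := cPr_le_one w hw0 (fun ω => u ω = false) hi0
  have haj1 := cPr_le_one w hw0 (fun ω => u ω = false) hj0
  rcases lt_and_lt_or_lt_and_lt_of_not_nested hnotnest_ij hnotnest_ji with
    ⟨hb, ha⟩ | ⟨hb, ha⟩
  · -- kinks at `b_j` for `l*_α` and at `a_i` for `l*_β`
    refine ⟨_, 1, _, 1, by linarith, by linarith, by linarith, by linarith,
      VoIG_min_mul_eq_zero hw1 _ hj0 hj1 zero_le_one hnondeg_j.le (.inl (mul_one _).ge),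
      VoIG_nonneg_of_concaveOn hw1 _ hi0 hi1 (concaveOn_min_mul _ _) trivial trivial,
      VoIG_min_mul_eq_zero hw1 _ hi0 hi1 zero_le_one hnondeg_i.le (.inr (mul_one _).le),
      VoIG_nonneg_of_concaveOn hw1 _ hj0 hj1 (concaveOn_min_mul _ _) trivial trivial⟩
  · -- kinks at `a_j` for `l*_α` and at `b_i` for `l*_β`
    refine ⟨_, 1, _, 1, by linarith, by linarith, by linarith, by linarith,
      VoIG_min_mul_eq_zero hw1 _ hj0 hj1 zero_le_one hnondeg_j.le (.inr (mul_one _).le),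
      VoIG_nonneg_of_concaveOn hw1 _ hi0 hi1 (concaveOn_min_mul _ _) trivial trivial,
      VoIG_min_mul_eq_zero hw1 _ hi0 hi1 zero_le_one hnondeg_i.le (.inl (mul_one _).ge),
      VoIG_nonneg_of_concaveOn hw1 _ hj0 hj1 (concaveOn_min_mul _ _) trivial trivial⟩
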